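/- arXiv:1905.04233 — 2 statements merged into one kernel-verified Lean document; each statement's English description precedes it below -/
import Mathlib

section
/- Let F be a convex class of distributions on ℝ, S : F × ℝ → ℝ a proper scoring rule, T : F → ℝ a max-functional, and G ∈ F. If there exists F ∈ F with T(F) > T(G), then for every ε > 0 there exists F_ε ∈ F with T(F_ε) = T(F) > T(G) and |S̄(F_ε, G) − S̄(G, G)| ≤ ε. -/
open MeasureTheory Filter

/-- The mixture `l • μ + (1-l) • ν` of two measures. -/
noncomputable def mix {O : Type*} [MeasurableSpace O] (μ ν : Measure O) (l : ℝ) : Measure O :=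
  ENNReal.ofReal l • μ + ENNReal.ofReal (1 - l) • ν

/-- `S` is a proper scoring rule on the class `𝓕` (first argument: forecast,
integration: with respect to the true distribution). -/
def ProperScoringRule {O : Type*} [MeasurableSpace O]
    (𝓕 : Set (Measure O)) (S : Measure O → O → ℝ) : Prop :=
  (∀ F ∈ 𝓕, ∀ G ∈ 𝓕, Integrable (S F) G) ∧
  (∀ F ∈ 𝓕, ∀ G ∈ 𝓕, ∫ y, S F y ∂F ≤ ∫ y, S G y ∂F)

/-- `T` is a max-functional on the class `𝓕`. -/
def MaxFunctional {O : Type*} [MeasurableSpace O]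
    (𝓕 : Set (Measure O)) (T : Measure O → ℝ) : Prop :=
  ∀ F₀ ∈ 𝓕, ∀ F₁ ∈ 𝓕, ∀ l ∈ Set.Ioo (0:ℝ) 1, T (mix F₁ F₀ l) = max (T F₀) (T F₁)


lemma integral_mix {O : Type*} [MeasurableSpace O] (μ ν : Measure O) (l : ℝ)
    (hl0 : 0 ≤ l) (hl1 : l ≤ 1) (f : O → ℝ)
    (hμ : Integrable f μ) (hν : Integrable f ν) :
    ∫ y, f y ∂(mix μ ν l) = l * ∫ y, f y ∂μ + (1 - l) * ∫ y, f y ∂ν := by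
  rw [mix, integral_add_measure (hμ.smul_measure ENNReal.ofReal_ne_top)
      (hν.smul_measure ENNReal.ofReal_ne_top), integral_smul_measure,
      integral_smul_measure, ENNReal.toReal_ofReal hl0,
      ENNReal.toReal_ofReal (by linarith)]
  simp [smul_eq_mul]

/-- Proper scoring rules cannot separate max-functional values: arbitrarily
different max-functional values may come with almost minimal expected score. -/
theorem proper_scoring_rule_max_functional {O : Type*} [MeasurableSpace O]
    (𝓕 : Set (Measure O)) (hprob : ∀ F ∈ 𝓕, IsProbabilityMeasure F)
    (hconv : ∀ F ∈ 𝓕, ∀ G ∈ 𝓕, ∀ l ∈ Set.Icc (0:ℝ) 1, mix F G l ∈ 𝓕)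
    (S : Measure O → O → ℝ) (hS : ProperScoringRule 𝓕 S)
    (T : Measure O → ℝ) (hmax : MaxFunctional 𝓕 T)
    (G : Measure O) (hG : G ∈ 𝓕) (F : Measure O) (hF : F ∈ 𝓕) (hT : T G < T F) :
    ∀ ε : ℝ, 0 < ε → ∃ Fε ∈ 𝓕, T Fε = T F ∧ T G < T Fε ∧
      |(∫ y, S Fε y ∂G) - ∫ y, S G y ∂G| ≤ ε := by
  intro ε hε
  set C : ℝ := (∫ y, S G y ∂F) - ∫ y, S F y ∂F with hC
  have hC0 : 0 ≤ C := by
    have := hS.2 F hF G hG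
    simp only [hC]; linarith
  set l : ℝ := min (1/2) (ε / (2 * (C + 1))) with hl
  have hl0 : 0 < l := lt_min (by norm_num) (by positivity)
  have hl1 : l ≤ 1/2 := min_le_left _ _
  have hlε : l ≤ ε / (2 * (C + 1)) := min_le_right _ _
  set Fε := mix F G l with hFεdef
  have hFε : Fε ∈ 𝓕 := hconv F hF G hG l ⟨hl0.le, by linarith⟩
  have hTFε : T Fε = max (T G) (T F) := hmax G hG F hF l ⟨hl0, by linarith⟩
  have hTmax : T Fε = T F := by rw [hTFε, max_eq_right hT.le]
  refine ⟨Fε, hFε, hTmax, by rwa [hTmax], ?_⟩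
  set a := ∫ y, S Fε y ∂G with ha
  set b := ∫ y, S G y ∂G with hb
  have hba : b ≤ a := hS.2 G hG Fε hFε
  have hexp1 : ∫ y, S Fε y ∂Fε = l * (∫ y, S Fε y ∂F) + (1 - l) * a :=
    integral_mix F G l hl0.le (by linarith) _ (hS.1 Fε hFε F hF) (hS.1 Fε hFε G hG)
  have hexp2 : ∫ y, S G y ∂Fε = l * (∫ y, S G y ∂F) + (1 - l) * b :=
    integral_mix F G l hl0.le (by linarith) _ (hS.1 G hG F hF) (hS.1 G hG G hG)
  have hprop : ∫ y, S Fε y ∂Fε ≤ ∫ y, S G y ∂Fε := hS.2 Fε hFε G hG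
  have hFFε : ∫ y, S F y ∂F ≤ ∫ y, S Fε y ∂F := hS.2 F hF Fε hFε
  have key : (1 - l) * (a - b) ≤ l * C := by
    rw [hexp1, hexp2] at hprop
    simp only [hC]; nlinarith
  rw [abs_of_nonneg (by linarith)]
  have h1 : (1/2) * (a - b) ≤ (1 - l) * (a - b) := by nlinarith
  have h2 : l * C ≤ ε / (2 * (C + 1)) * C := by nlinarith
  have h3 : ε / (2 * (C + 1)) * C ≤ ε / 2 := by
    rw [div_mul_eq_mul_div, div_le_div_iff₀ (by positivity) (by norm_num)]
    nlinarith
  nlinarith [h1, h2, h3, key]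
end

section
/- Let F be a convex class of distribution functions on ℝ, S : F × ℝ → ℝ a proper scoring rule, and G ∈ F. If there exists F ∈ F with heavier tail than G (i.e., G <ₜ F), then for every ε > 0 there exists F_ε ∈ F that is not tail equivalent to G and satisfies |S̄(F_ε, G) − S̄(G, G)| ≤ ε. -/
/-!
Mixing a little of the heavier-tailed `F` into `G` costs little in expected score: with
`G_λ = λ F + (1 - λ) G`, properness at `G_λ`, `F` and `G` gives
`(1 - λ) (S̄(G_λ, G) - S̄(G, G)) ≤ λ (S̄(G, F) - S̄(F, F))`, so the excess score vanishes as `λ → 0`.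
Yet for every `λ > 0` the tail of `G_λ` is dominated by `λ F̄`, which is not comparable to `Ḡ`:
either `G_λ` has the larger upper endpoint of `F`, or `Ḡ_λ / Ḡ = λ F̄ / Ḡ + (1 - λ) → ∞`.
-/

open MeasureTheory Filter

/-- The cumulative distribution function of a measure on `ℝ`. -/
noncomputable def mcdf (μ : Measure ℝ) : ℝ → ℝ := fun x => (μ (Set.Iic x)).toReal

/-- The upper endpoint `sup {x | F x < 1}` of a distribution function, in `EReal`. -/
noncomputable def upEnd (F : ℝ → ℝ) : EReal :=
  sSup ((fun x : ℝ => (x : EReal)) '' {x : ℝ | F x < 1})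

/-- The filter of approach towards an (extended-real) upper endpoint. -/
noncomputable def endFilter (e : EReal) : Filter ℝ :=
  if e = ⊤ then atTop else nhdsWithin e.toReal (Set.Iio e.toReal)

/-- The strict tail order: `G` has strictly heavier tail than `F`. -/
def TailLT (F G : ℝ → ℝ) : Prop :=
  upEnd F < upEnd G ∨
    (upEnd F = upEnd G ∧
      Tendsto (fun x => (1 - F x) / (1 - G x)) (endFilter (upEnd G)) (nhds 0))

/-- `F` and `G` are tail equivalent. -/
def TailEquiv (F G : ℝ → ℝ) : Prop :=
  upEnd F = upEnd G ∧ ∃ c : ℝ, 0 < c ∧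
    Tendsto (fun x => (1 - F x) / (1 - G x)) (endFilter (upEnd G)) (nhds c)

open ProbabilityTheory

section Mixture

variable {O : Type*} [MeasurableSpace O]

lemma integral_mix_s14 {F G : Measure O} {f : O → ℝ} {l : ℝ} (h0 : 0 ≤ l) (h1 : l ≤ 1)
    (hF : Integrable f F) (hG : Integrable f G) :
    ∫ y, f y ∂(mix F G l) = l * ∫ y, f y ∂F + (1 - l) * ∫ y, f y ∂G := by
  rw [mix, integral_add_measure (hF.smul_measure ENNReal.ofReal_ne_top)
      (hG.smul_measure ENNReal.ofReal_ne_top),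
    integral_smul_measure, integral_smul_measure,
    ENNReal.toReal_ofReal h0, ENNReal.toReal_ofReal (sub_nonneg.2 h1), smul_eq_mul, smul_eq_mul]

namespace ProperScoringRule

variable {𝓕 : Set (Measure O)} {S : Measure O → O → ℝ} {F G : Measure O} {l : ℝ}

lemma mul_integral_mix_sub_le (hS : ProperScoringRule 𝓕 S) (hF : F ∈ 𝓕) (hG : G ∈ 𝓕)
    (h0 : 0 ≤ l) (h1 : l ≤ 1) (hmix : mix F G l ∈ 𝓕) :
    (1 - l) * (∫ y, S (mix F G l) y ∂G - ∫ y, S G y ∂G) ≤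
      l * (∫ y, S G y ∂F - ∫ y, S F y ∂F) := by
  have hmixed : ∫ y, S (mix F G l) y ∂(mix F G l) ≤ ∫ y, S G y ∂(mix F G l) := hS.2 _ hmix G hG
  rw [integral_mix_s14 h0 h1 (hS.1 _ hmix F hF) (hS.1 _ hmix G hG),
    integral_mix_s14 h0 h1 (hS.1 G hG F hF) (hS.1 G hG G hG)] at hmixed
  have hatF : ∫ y, S F y ∂F ≤ ∫ y, S (mix F G l) y ∂F := hS.2 F hF _ hmix
  nlinarith

lemma exists_abs_integral_mix_sub_le (hS : ProperScoringRule 𝓕 S) (hF : F ∈ 𝓕) (hG : G ∈ 𝓕)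
    (hmix : ∀ l ∈ Set.Icc (0 : ℝ) 1, mix F G l ∈ 𝓕) {ε : ℝ} (hε : 0 < ε) :
    ∃ l ∈ Set.Ioo (0 : ℝ) 1, |∫ y, S (mix F G l) y ∂G - ∫ y, S G y ∂G| ≤ ε := by
  set C := ∫ y, S G y ∂F - ∫ y, S F y ∂F
  have hC : 0 ≤ C := sub_nonneg.2 (hS.2 F hF G hG)
  have hpos : 0 < C + ε + 1 := by linarith
  -- with this `l`, the bound `l C / (1 - l)` becomes `ε C / (C + 1) ≤ ε`
  set l := ε / (C + ε + 1)
  have hl0 : 0 < l := div_pos hε hpos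
  have hl1 : l < 1 := (div_lt_one hpos).2 (by linarith)
  have hlC : l * (C + ε + 1) = ε := div_mul_cancel₀ ε hpos.ne'
  have hmixl := hmix l ⟨hl0.le, hl1.le⟩
  refine ⟨l, ⟨hl0, hl1⟩, ?_⟩
  have hbound := hS.mul_integral_mix_sub_le hF hG hl0.le hl1.le hmixl
  rw [abs_of_nonneg (sub_nonneg.2 (hS.2 G hG _ hmixl))]
  nlinarith

end ProperScoringRule

end Mixture

lemma mcdf_eq_cdf (μ : Measure ℝ) [IsProbabilityMeasure μ] : mcdf μ = cdf μ :=
  funext fun x => (cdf_eq_real μ x).symm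

lemma mcdf_mix (F G : Measure ℝ) [IsFiniteMeasure F] [IsFiniteMeasure G] {l : ℝ}
    (h0 : 0 ≤ l) (h1 : l ≤ 1) (x : ℝ) :
    mcdf (mix F G l) x = l * mcdf F x + (1 - l) * mcdf G x := by
  simp only [mcdf, mix, Measure.add_apply, Measure.smul_apply, smul_eq_mul]
  rw [ENNReal.toReal_add (ENNReal.mul_ne_top ENNReal.ofReal_ne_top (measure_ne_top _ _))
      (ENNReal.mul_ne_top ENNReal.ofReal_ne_top (measure_ne_top _ _)),
    ENNReal.toReal_mul, ENNReal.toReal_mul,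
    ENNReal.toReal_ofReal h0, ENNReal.toReal_ofReal (sub_nonneg.2 h1)]

lemma monotone_mcdf (μ : Measure ℝ) [IsFiniteMeasure μ] : Monotone (mcdf μ) := fun _ _ hxy =>
  ENNReal.toReal_mono (measure_ne_top μ _) (measure_mono (Set.Iic_subset_Iic.2 hxy))

lemma mcdf_le_one (μ : Measure ℝ) [IsProbabilityMeasure μ] (x : ℝ) : mcdf μ x ≤ 1 :=
  mcdf_eq_cdf μ ▸ cdf_le_one μ x

lemma Monotone.lt_one_of_lt_upEnd {F : ℝ → ℝ} (hF : Monotone F) {x : ℝ}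
    (hx : (x : EReal) < upEnd F) : F x < 1 := by
  obtain ⟨_, ⟨y, hy, rfl⟩, hxy⟩ := lt_sSup_iff.mp hx
  exact (hF (EReal.coe_lt_coe_iff.mp hxy).le).trans_lt hy

lemma upEnd_mcdf_ne_bot (μ : Measure ℝ) [IsProbabilityMeasure μ] : upEnd (mcdf μ) ≠ ⊥ := by
  obtain ⟨x, hx⟩ := ((tendsto_cdf_atBot μ).eventually (gt_mem_nhds zero_lt_one)).exists
  rw [← mcdf_eq_cdf] at hx
  exact ne_bot_of_le_ne_bot (EReal.coe_ne_bot x) (le_sSup ⟨x, hx, rfl⟩)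

lemma upEnd_mcdf_mix (F G : Measure ℝ) [IsProbabilityMeasure F] [IsProbabilityMeasure G]
    {l : ℝ} (h0 : 0 < l) (h1 : l < 1) :
    upEnd (mcdf (mix F G l)) = max (upEnd (mcdf F)) (upEnd (mcdf G)) := by
  have hset : {x : ℝ | mcdf (mix F G l) x < 1} =
      {x : ℝ | mcdf F x < 1} ∪ {x : ℝ | mcdf G x < 1} := by
    ext x
    have hF := mcdf_le_one F x
    have hG := mcdf_le_one G x
    simp only [Set.mem_ofPred_eq, Set.mem_union, mcdf_mix F G h0.le h1.le x]
    constructor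
    · intro hlt
      by_contra! hc
      nlinarith
    · rintro (hlt | hlt) <;> nlinarith
  rw [upEnd, hset, Set.image_union, sSup_union]
  rfl

instance (e : EReal) : (endFilter e).NeBot := by
  unfold endFilter
  split <;> infer_instance

lemma eventually_coe_lt_of_endFilter {e : EReal} (he : e ≠ ⊥) :
    ∀ᶠ x : ℝ in endFilter e, (x : EReal) < e := by
  unfold endFilter
  split
  · next htop => exact Eventually.of_forall fun x => htop ▸ EReal.coe_lt_top x
  · next htop =>
    refine eventually_nhdsWithin_of_forall fun x (hx : x < e.toReal) => ?_
    rw [← EReal.coe_toReal htop he]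
    exact EReal.coe_lt_coe_iff.mpr hx

lemma not_tailEquiv_mcdf_mix {F G : Measure ℝ} [IsProbabilityMeasure F] [IsProbabilityMeasure G]
    (hGF : TailLT (mcdf G) (mcdf F)) {l : ℝ} (h0 : 0 < l) (h1 : l < 1) :
    ¬ TailEquiv (mcdf (mix F G l)) (mcdf G) := by
  rintro ⟨hend, c, -, hc⟩
  rcases hGF with hlt | ⟨hend', hratio⟩
  · rw [upEnd_mcdf_mix F G h0 h1, max_eq_left hlt.le] at hend
    exact hlt.ne hend.symm
  · rw [← hend'] at hratio
    -- `(Ḡ_λ / Ḡ - (1 - λ)) / λ = F̄ / Ḡ` is the reciprocal of `Ḡ / F̄ → 0`, so their product is `1`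
    have hprod := ((hc.sub_const (1 - l)).div_const l).mul hratio
    have hone : ∀ᶠ x in endFilter (upEnd (mcdf G)),
        ((1 - mcdf (mix F G l) x) / (1 - mcdf G x) - (1 - l)) / l *
          ((1 - mcdf G x) / (1 - mcdf F x)) = 1 := by
      filter_upwards [eventually_coe_lt_of_endFilter (upEnd_mcdf_ne_bot G)] with x hx
      have hF1 := (monotone_mcdf F).lt_one_of_lt_upEnd (hend' ▸ hx)
      have hG1 := (monotone_mcdf G).lt_one_of_lt_upEnd hx
      rw [mcdf_mix F G h0.le h1.le x]
      field_simp [(sub_pos.2 hF1).ne', (sub_pos.2 hG1).ne']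
      ring
    have := tendsto_nhds_unique (tendsto_const_nhds.congr' (hone.mono fun _ h => h.symm)) hprod
    simp at this

/-- No proper scoring rule is tail equivalent: a distribution which is not tail
equivalent to the truth can have an almost minimal expected score. -/
theorem proper_scoring_rule_not_tail_equivalent
    (𝓕 : Set (Measure ℝ)) (hprob : ∀ F ∈ 𝓕, IsProbabilityMeasure F)
    (hconv : ∀ F ∈ 𝓕, ∀ G ∈ 𝓕, ∀ l ∈ Set.Icc (0:ℝ) 1, mix F G l ∈ 𝓕)
    (S : Measure ℝ → ℝ → ℝ) (hS : ProperScoringRule 𝓕 S)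
    (G : Measure ℝ) (hG : G ∈ 𝓕) (F : Measure ℝ) (hF : F ∈ 𝓕)
    (hheavier : TailLT (mcdf G) (mcdf F)) :
    ∀ ε : ℝ, 0 < ε → ∃ Fε ∈ 𝓕, ¬ TailEquiv (mcdf Fε) (mcdf G) ∧
      |(∫ y, S Fε y ∂G) - ∫ y, S G y ∂G| ≤ ε := by
  intro ε hε
  have := hprob F hF
  have := hprob G hG
  obtain ⟨l, ⟨hl0, hl1⟩, hscore⟩ :=
    hS.exists_abs_integral_mix_sub_le hF hG (hconv F hF G hG) hε
  exact ⟨mix F G l, hconv F hF G hG l ⟨hl0.le, hl1.le⟩,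
    not_tailEquiv_mcdf_mix hheavier hl0 hl1, hscore⟩
end
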